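/- arXiv:1402.6100 — 5 statements merged into one kernel-verified Lean document; each statement's English description precedes it below -/
import Mathlib

section
/- In the Clifford module F, the operators J^f(n) defined as the modes of the normally ordered product :Psi^+(z)Psi^-(z): satisfy the commutation relations [J^f(n), Psi^±(m + 1/2)] = ± Psi^±(m + n + 1/2) for all integers m, n. -/
/-- The fermionic Fock space `F` for the Clifford algebra `CL`:
`ψp n` is `Ψ⁺(n + 1/2)` and `ψm n` is `Ψ⁻(n + 1/2)` for `n : ℤ`. -/
structure CliffordFock (V : Type) [AddCommGroup V] [Module ℂ V] where
  ψp : ℤ → Module.End ℂ V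
  ψm : ℤ → Module.End ℂ V
  vac : V
  anti_pm : ∀ r s : ℤ, ψp r * ψm s + ψm s * ψp r = if r + s + 1 = 0 then 1 else 0
  anti_pp : ∀ r s : ℤ, ψp r * ψp s + ψp s * ψp r = 0
  anti_mm : ∀ r s : ℤ, ψm r * ψm s + ψm s * ψm r = 0
  vac_p : ∀ n : ℤ, 0 ≤ n → ψp n vac = 0
  vac_m : ∀ n : ℤ, 0 ≤ n → ψm n vac = 0
  basis : Module.Basis (Finset ℕ × Finset ℕ) ℂ V
  basis_eq : ∀ A B : Finset ℕ,
    basis (A, B) =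
      ((((A.sort (· ≤ ·)).reverse.map fun n => ψm (-(n + 1 : ℤ))).prod *
        ((B.sort (· ≤ ·)).reverse.map fun n => ψp (-(n + 1 : ℤ))).prod) vac)

variable {V : Type} [AddCommGroup V] [Module ℂ V]

/-- `Ω_s = Ψ⁺(-s-1/2) Ψ⁺(-s+1/2) ⋯ Ψ⁺(-3/2) |0⟩`. -/
noncomputable def CliffordFock.Omega (M : CliffordFock V) (s : ℕ) : V :=
  (((List.range' 1 s).reverse.map fun n => M.ψp (-(n + 1 : ℤ))).prod) M.vac

/-- `Gm i` is the operator `G⁻(i - 1/2) = (ℓ + 1 - i) Ψ⁻(i - 1/2) + ∑_{n ≥ 1} χ_{-n} Ψ⁻(n + i - 1/2)`,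
encoded by truncations (on each fixed vector the sum stabilizes). -/
def IsGmFamily (M : CliffordFock V) (ℓ : ℤ) (χ : ℕ → ℂ) (Gm : ℤ → Module.End ℂ V) : Prop :=
  ∀ (i : ℤ) (v : V), ∃ N : ℕ, ∀ N' : ℕ, N ≤ N' →
    Gm i v = ((ℓ + 1 - i : ℤ) : ℂ) • M.ψm (i - 1) v +
      ∑ n ∈ Finset.Icc 1 N', χ n • M.ψm ((n : ℤ) + i - 1) v

/-- The normally ordered product `:Ψ⁺(k+1/2) Ψ⁻(n-k-1/2):`. -/
def CliffordFock.nord (M : CliffordFock V) (n k : ℤ) : Module.End ℂ V :=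
  if 0 ≤ n - k - 1 then M.ψp k * M.ψm (n - k - 1)
  else -(M.ψm (n - k - 1) * M.ψp k)

/-!
The commutator of a product `a * b` is expressed through anticommutators,
`⁅a * b, c⁆ = a {b, c} - {a, c} b`, and the anticommutators of the `Ψ`'s are scalars. Normal
ordering only shifts `Ψ⁺ Ψ⁻` by such a scalar, so it does not change commutators, and
`⁅:Ψ⁺(k + 1/2) Ψ⁻(n - k - 1/2):, Ψ^±(m + 1/2)⁆` is `± Ψ^±(m + n + 1/2)` for the single index
`k` that pairs with `m`, and zero otherwise. Since `J^f(n)` agrees on each vector with all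
sufficiently long truncations of its defining sum, the commutators pass to `J^f(n)`.
-/

attribute [local instance] LieRing.ofAssociativeRing

theorem Ring.mul_lie_eq_sub_anticomm {R : Type*} [Ring R] (a b c : R) :
    ⁅a * b, c⁆ = a * (b * c + c * b) - (a * c + c * a) * b := by
  rw [Ring.lie_def]; noncomm_ring

theorem Module.End.lie_eq_of_eventually {R M : Type*} [Semiring R] [AddCommGroup M]
    [Module R M] {f : ℕ → Module.End R M} {J x y : Module.End R M}
    (hJ : ∀ v, ∀ᶠ N in Filter.atTop, J v = f N v)
    (hf : ∀ᶠ N in Filter.atTop, ⁅f N, x⁆ = y) : ⁅J, x⁆ = y := by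
  ext v
  obtain ⟨N, hJx, hJv, hfN⟩ := ((hJ (x v)).and ((hJ v).and hf)).exists
  rw [← hfN, Ring.lie_def, Ring.lie_def]
  simp [hJx, hJv]

namespace CliffordFock

variable (M : CliffordFock V)

theorem lie_nord (n k : ℤ) (x : Module.End ℂ V) :
    ⁅M.nord n k, x⁆ = ⁅M.ψp k * M.ψm (n - k - 1), x⁆ := by
  unfold nord
  split_ifs
  · rfl
  · have hnord : -(M.ψm (n - k - 1) * M.ψp k) =
        M.ψp k * M.ψm (n - k - 1) - if k + (n - k - 1) + 1 = 0 then 1 else 0 := by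
      rw [← M.anti_pm]; abel
    have hcentral : ⁅(if k + (n - k - 1) + 1 = 0 then 1 else 0 : Module.End ℂ V), x⁆ = 0 :=
      commute_iff_lie_eq.1 (by split_ifs <;> simp)
    rw [hnord, sub_lie, hcentral, sub_zero]

theorem lie_nord_ψp (n k m : ℤ) :
    ⁅M.nord n k, M.ψp m⁆ = if k = m + n then M.ψp (m + n) else 0 := by
  rw [lie_nord, Ring.mul_lie_eq_sub_anticomm, add_comm (M.ψm _ * _), M.anti_pm, M.anti_pp,
    zero_mul, sub_zero]
  simp only [show m + (n - k - 1) + 1 = 0 ↔ k = m + n by omega]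
  split_ifs with h
  · rw [mul_one, h]
  · rw [mul_zero]

theorem lie_nord_ψm (n k m : ℤ) :
    ⁅M.nord n k, M.ψm m⁆ = if k = -(m + 1) then -M.ψm (m + n) else 0 := by
  rw [lie_nord, Ring.mul_lie_eq_sub_anticomm, M.anti_mm, M.anti_pm, mul_zero, zero_sub]
  simp only [show k + m + 1 = 0 ↔ k = -(m + 1) by omega]
  split_ifs with h
  · rw [one_mul, show n - k - 1 = m + n by omega]
  · rw [zero_mul, neg_zero]

theorem lie_sum_nord_ψp (n m : ℤ) {N : ℕ} (hN : (m + n).natAbs ≤ N) :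
    ⁅∑ k ∈ Finset.Icc (-(N : ℤ)) N, M.nord n k, M.ψp m⁆ = M.ψp (m + n) := by
  rw [sum_lie]
  simp_rw [lie_nord_ψp]
  rw [Finset.sum_ite_eq', if_pos (Finset.mem_Icc.2 (by omega))]

theorem lie_sum_nord_ψm (n m : ℤ) {N : ℕ} (hN : (m + 1).natAbs ≤ N) :
    ⁅∑ k ∈ Finset.Icc (-(N : ℤ)) N, M.nord n k, M.ψm m⁆ = -M.ψm (m + n) := by
  rw [sum_lie]
  simp_rw [lie_nord_ψm]
  rw [Finset.sum_ite_eq', if_pos (Finset.mem_Icc.2 (by omega))]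

end CliffordFock

open Filter in
theorem charge_current_commutators (M : CliffordFock V) (J : ℤ → Module.End ℂ V)
    (hJ : ∀ (n : ℤ) (v : V), ∃ N : ℕ, ∀ N' : ℕ, N ≤ N' →
      J n v = (∑ k ∈ Finset.Icc (-(N' : ℤ)) (N' : ℤ), M.nord n k) v) :
    ∀ m n : ℤ,
      (J n * M.ψp m - M.ψp m * J n = M.ψp (m + n)) ∧
      (J n * M.ψm m - M.ψm m * J n = -M.ψm (m + n)) := by
  intro m n
  have hJn : ∀ v, ∀ᶠ N : ℕ in atTop, J n v = (∑ k ∈ Finset.Icc (-(N : ℤ)) N, M.nord n k) v :=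
    fun v => eventually_atTop.2 (hJ n v)
  simp only [← Ring.lie_def]
  constructor
  · refine Module.End.lie_eq_of_eventually hJn ?_
    filter_upwards [eventually_ge_atTop (m + n).natAbs] with N hN
    exact M.lie_sum_nord_ψp n m hN
  · refine Module.End.lie_eq_of_eventually hJn ?_
    filter_upwards [eventually_ge_atTop (m + 1).natAbs] with N hN
    exact M.lie_sum_nord_ψm n m hN
end

section
/- Let chi_{-1}, chi_{-2}, ... be complex numbers and ell >= 1. Define operators on the exterior algebra F by G^-(i - 1/2) = (ell + 1 - i) Psi^-(i - 1/2) + sum_{n>=1} chi_{-n} Psi^-(n + i - 1/2). Let Omega_ell = Psi^+(-ell - 1/2) Psi^+(-ell + 1/2) ... Psi^+(-3/2) 1. Then G^-(1/2) G^-(3/2) ... G^-(ell - 1/2) Omega_ell = (-1)^ell * ell! * S_ell(-chi_{-1}, ..., -chi_{-ell}) * 1, where S_ell is the Schur polynomial. -/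
noncomputable def schurA : PowerSeries (MvPolynomial ℕ ℚ) :=
  PowerSeries.mk fun n => if n = 0 then 0 else MvPolynomial.C ((n : ℚ)⁻¹) * MvPolynomial.X n

/-- `S` is the family of Schur polynomials, i.e. the coefficients of the formal power
series `exp (∑_{n≥1} (x_n/n) yⁿ) = ∑_r S_r yʳ`.  Since `schurA` has zero constant term,
the coefficient of `yʳ` in its exponential is the finite sum
`∑_{k≤r} (1/k!) · [yʳ] (schurA ^ k)`. -/
def IsSchurFamily (S : ℕ → MvPolynomial ℕ ℚ) : Prop :=
  ∀ r : ℕ, S r = ∑ k ∈ Finset.range (r + 1),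
    ((k.factorial : ℚ)⁻¹) • PowerSeries.coeff r (schurA ^ k)

variable {V : Type} [AddCommGroup V] [Module ℂ V]

/-!
Each `G⁻(i - 1/2)` is a combination of annihilators. On the state with modes `{1, …, j} ∪ {t}`,
`t > j`, the operator `G⁻(j + 1/2)` can only remove mode `j` (weight `ℓ - j`) or mode `t`
(weight `χ_{t-j}`), so `G⁻(1/2) ⋯ G⁻(j + 1/2)` maps that state to `c_j(t) |0⟩` with
`c_j(t) = χ_{t-j} c_{j-1}(j) - (ℓ - j) c_{j-1}(t)`. With `x = -χ`, this recursion is solved by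
`c_j(t) = (-1)^{j+1} (ℓ-1)⋯(ℓ-j) ∑_{i ≤ j} x_{t-i} e_i`, where `(ℓ - n) e_n = ∑_k x_k e_{n-k}` and
`e_0 = 1`. Put `P = ∑ x_k yᵏ`, `A = ∑ S_n(x) yⁿ` and `E = ∑ e_n yⁿ`. Since `A = exp ∫ P/y`, we have
`y A' = P A`, and comparing the coefficients of `y^ℓ` in `A (P E) = (P A) E` gives
`∑_{i < ℓ} x_{ℓ-i} e_i = ℓ S_ℓ(x)`.
-/

open PowerSeries Finset

section Schur

lemma constantCoeff_schurA : constantCoeff schurA = 0 := by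
  simp [schurA, ← coeff_zero_eq_constantCoeff_apply]

lemma coeff_pow_schurA_of_lt {k r : ℕ} (h : r < k) : coeff r (schurA ^ k) = 0 := by
  obtain ⟨q, hq⟩ := pow_dvd_pow_of_dvd (X_dvd_iff.mpr constantCoeff_schurA) k
  rw [hq, coeff_X_pow_mul', if_neg (by omega)]

lemma X_mul_derivative_schurA :
    X * d⁄dX _ schurA = PowerSeries.mk fun n => if n = 0 then 0 else MvPolynomial.X n := by
  ext n : 1
  rcases n with _ | n
  · simp
  · rw [coeff_succ_X_mul, coeff_derivative]
    simp only [schurA, coeff_mk, Nat.add_eq_zero_iff, one_ne_zero, and_false, if_false]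
    rw [mul_right_comm, ← Nat.cast_succ, ← map_natCast MvPolynomial.C, ← map_mul,
      Nat.cast_succ, inv_mul_cancel₀ (by positivity), map_one, one_mul]

lemma coeff_X_mul_derivative {R : Type*} [CommRing R] (f : R⟦X⟧) (n : ℕ) :
    coeff n (X * d⁄dX R f) = n * coeff n f := by
  rcases n with _ | n
  · simp
  · rw [coeff_succ_X_mul, coeff_derivative, mul_comm, Nat.cast_succ]

lemma coeff_mk_ite_mul {R : Type*} [Semiring R] (x : ℕ → R) (f : R⟦X⟧) (n : ℕ) :
    coeff n (PowerSeries.mk (fun k => if k = 0 then 0 else x k) * f) =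
      ∑ i ∈ range n, x (n - i) * coeff i f := by
  rw [coeff_mul, ← Finset.Nat.sum_antidiagonal_swap]
  simp only [Prod.fst_swap, Prod.snd_swap]
  rw [Finset.Nat.sum_antidiagonal_eq_sum_range_succ
      (fun i j => coeff j (PowerSeries.mk fun k => if k = 0 then 0 else x k) * coeff i f),
    sum_range_succ]
  simp only [coeff_mk, Nat.sub_self, if_true, zero_mul, add_zero]
  refine sum_congr rfl fun i hi => ?_
  rw [if_neg (by simp at hi; omega)]

variable {S : ℕ → MvPolynomial ℕ ℚ}

lemma IsSchurFamily.eq_coeff_exp_subst (hS : IsSchurFamily S) (r : ℕ) :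
    S r = coeff r ((exp (MvPolynomial ℕ ℚ)).subst schurA) := by
  rw [hS r, coeff_subst' (HasSubst.of_constantCoeff_zero' constantCoeff_schurA),
    finsum_eq_sum_of_support_subset (s := range (r + 1))]
  · refine sum_congr rfl fun k _ => ?_
    rw [coeff_exp, algebraMap_smul, one_div]
  · intro k hk
    rw [Function.mem_support] at hk
    rw [coe_range, Set.mem_Iio]
    by_contra h
    exact hk (by rw [coeff_pow_schurA_of_lt (by omega), smul_zero])

lemma IsSchurFamily.apply_zero (hS : IsSchurFamily S) : S 0 = 1 := by
  simp [hS 0]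

lemma IsSchurFamily.newton (hS : IsSchurFamily S) (n : ℕ) :
    n * S n = ∑ i ∈ range n, MvPolynomial.X (n - i) * S i := by
  have hode : X * d⁄dX _ ((exp (MvPolynomial ℕ ℚ)).subst schurA) =
      (X * d⁄dX _ schurA) * (exp (MvPolynomial ℕ ℚ)).subst schurA := by
    rw [derivative_subst (HasSubst.of_constantCoeff_zero' constantCoeff_schurA), derivative_exp]
    ring
  have h := congrArg (coeff n) hode
  rw [coeff_X_mul_derivative, X_mul_derivative_schurA, coeff_mk_ite_mul] at h
  simpa only [← hS.eq_coeff_exp_subst] using h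

lemma IsSchurFamily.aeval_newton (hS : IsSchurFamily S) {A : Type*} [CommRing A] [Algebra ℚ A]
    (x : ℕ → A) (n : ℕ) :
    n * MvPolynomial.aeval x (S n) = ∑ i ∈ range n, x (n - i) * MvPolynomial.aeval x (S i) := by
  simpa using congrArg (MvPolynomial.aeval x) (hS.newton n)

end Schur

section TwistedNewton

variable {K : Type*} [Field K]

noncomputable def twistedNewtonSeq (ℓ : ℕ) (x : ℕ → K) : ℕ → K
  | 0 => 1
  | n + 1 => ((ℓ : K) - (n + 1))⁻¹ * ∑ i : Fin (n + 1), x (n + 1 - i) * twistedNewtonSeq ℓ x i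

/-- `omegaCoeff ℓ (-χ) j t` is the scalar by which `G⁻(1/2) ⋯ G⁻(j + 1/2)` maps
`Ψ⁺(-t-1/2) Ψ⁺(-j-1/2) ⋯ Ψ⁺(-3/2) |0⟩` to a multiple of `|0⟩`. -/
noncomputable def omegaCoeff (ℓ : ℕ) (x : ℕ → K) (j t : ℕ) : K :=
  (-1) ^ (j + 1) * ((ℓ - 1).descFactorial j : K) *
    ∑ i ∈ range (j + 1), x (t - i) * twistedNewtonSeq ℓ x i

lemma omegaCoeff_zero (ℓ : ℕ) (x : ℕ → K) (t : ℕ) : omegaCoeff ℓ x 0 t = -x t := by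
  simp [omegaCoeff, twistedNewtonSeq]

variable [CharZero K]

lemma sub_mul_twistedNewtonSeq_succ {ℓ n : ℕ} (x : ℕ → K) (hn : n + 1 < ℓ) :
    ((ℓ : K) - (n + 1)) * twistedNewtonSeq ℓ x (n + 1) =
      ∑ i ∈ range (n + 1), x (n + 1 - i) * twistedNewtonSeq ℓ x i := by
  have hne : (ℓ : K) - (n + 1) ≠ 0 := by
    rw [sub_ne_zero]
    exact_mod_cast hn.ne'
  rw [twistedNewtonSeq, mul_inv_cancel_left₀ hne, Fin.sum_univ_eq_sum_range
    (fun i => x (n + 1 - i) * twistedNewtonSeq ℓ x i)]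

theorem sum_mul_twistedNewtonSeq (x a : ℕ → K) (ha₀ : a 0 = 1)
    (ha : ∀ n : ℕ, (n : K) * a n = ∑ i ∈ range n, x (n - i) * a i) (ℓ : ℕ) :
    ∑ i ∈ range ℓ, x (ℓ - i) * twistedNewtonSeq ℓ x i = ℓ * a ℓ := by
  set e := twistedNewtonSeq ℓ x
  set P : K⟦X⟧ := PowerSeries.mk fun k => if k = 0 then 0 else x k
  have hPA (n : ℕ) : coeff n (P * PowerSeries.mk a) = n * a n := by
    rw [coeff_mk_ite_mul, ha]
    simp only [coeff_mk]
  have hPE (n : ℕ) : coeff n (P * PowerSeries.mk e) = ∑ i ∈ range n, x (n - i) * e i := by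
    simp only [P, coeff_mk_ite_mul, coeff_mk]
  obtain _ | m := ℓ
  · simp
  rw [← hPE]
  have key := congrArg (coeff (m + 1)) (show
    PowerSeries.mk a * (P * PowerSeries.mk e) = (P * PowerSeries.mk a) * PowerSeries.mk e by ring)
  rw [coeff_mul, coeff_mul,
    Finset.Nat.sum_antidiagonal_eq_sum_range_succ
      (fun i j => coeff i (PowerSeries.mk a) * coeff j (P * PowerSeries.mk e)),
    Finset.Nat.sum_antidiagonal_eq_sum_range_succ
      (fun i j => coeff i (P * PowerSeries.mk a) * coeff j (PowerSeries.mk e)),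
    sum_range_succ, sum_range_succ', sum_range_succ, sum_range_succ'] at key
  have hmid : ∀ k ∈ range m, coeff (k + 1) (PowerSeries.mk a) *
      coeff (m + 1 - (k + 1)) (P * PowerSeries.mk e) =
      coeff (k + 1) (P * PowerSeries.mk a) * coeff (m + 1 - (k + 1)) (PowerSeries.mk e) := by
    intro k hk
    obtain ⟨n, hn⟩ : ∃ n, m + 1 - (k + 1) = n + 1 := ⟨m - k - 1, by simp at hk; omega⟩
    have hcast : ((k + 1 : ℕ) : K) = (m + 1 : ℕ) - (n + 1) := by
      rw [eq_sub_iff_add_eq]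
      exact_mod_cast (by omega : k + 1 + (n + 1) = m + 1)
    rw [hn, hPE, ← sub_mul_twistedNewtonSeq_succ x (by omega), hPA, coeff_mk, coeff_mk, hcast]
    ring
  rw [sum_congr rfl hmid] at key
  simpa [hPA, hPE, ha₀, e, twistedNewtonSeq] using key

lemma omegaCoeff_succ {ℓ j : ℕ} (x : ℕ → K) (hj : j + 1 < ℓ) (t : ℕ) :
    omegaCoeff ℓ x (j + 1) t =
      -x (t - (j + 1)) * omegaCoeff ℓ x j (j + 1) - ((ℓ : K) - (j + 1)) * omegaCoeff ℓ x j t := by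
  have hdesc : ((ℓ - 1).descFactorial (j + 1) : K) =
      ((ℓ : K) - (j + 1)) * (ℓ - 1).descFactorial j := by
    rw [Nat.descFactorial_succ, Nat.cast_mul, Nat.cast_sub (by omega), Nat.cast_sub (by omega)]
    push_cast
    ring
  simp only [omegaCoeff]
  rw [← sub_mul_twistedNewtonSeq_succ x hj, hdesc, sum_range_succ]
  ring

lemma omegaCoeff_self {m : ℕ} (x a : ℕ → K) (ha₀ : a 0 = 1)
    (ha : ∀ n : ℕ, (n : K) * a n = ∑ i ∈ range n, x (n - i) * a i) :
    omegaCoeff (m + 1) x m (m + 1) = (-1) ^ (m + 1) * (m + 1).factorial * a (m + 1) := by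
  rw [omegaCoeff, sum_mul_twistedNewtonSeq x a ha₀ ha, Nat.add_sub_cancel,
    Nat.descFactorial_self, Nat.factorial_succ]
  push_cast
  ring

end TwistedNewton

namespace CliffordFock

variable (M : CliffordFock V)

def create (L : List ℕ) : Module.End ℂ V :=
  (L.map fun n => M.ψp (-(n + 1 : ℤ))).prod

lemma create_cons (n : ℕ) (L : List ℕ) :
    M.create (n :: L) = M.ψp (-(n + 1 : ℤ)) * M.create L := by
  simp [create]

lemma ψm_ψp_apply (m t : ℤ) (v : V) :
    M.ψm m (M.ψp t v) = (if t + m + 1 = 0 then v else 0) - M.ψp t (M.ψm m v) := by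
  have h := congrArg (· v) (M.anti_pm t m)
  simp only [LinearMap.add_apply, Module.End.mul_apply] at h
  split_ifs at h ⊢ <;> simp only [Module.End.one_apply, LinearMap.zero_apply] at h <;>
    exact eq_sub_of_add_eq' h

lemma ψm_create_cons_apply (m n : ℕ) (L : List ℕ) (v : V) :
    M.ψm m (M.create (n :: L) v) =
      (if n = m then M.create L v else 0) - M.ψp (-(n + 1 : ℤ)) (M.ψm m (M.create L v)) := by
  rw [create_cons, Module.End.mul_apply, ψm_ψp_apply]
  congr 2
  simp only [eq_iff_iff]
  omega

lemma ψm_create_vac_of_not_mem {m : ℕ} {L : List ℕ} (h : m ∉ L) :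
    M.ψm m (M.create L M.vac) = 0 := by
  induction L with
  | nil => exact M.vac_m m (Int.natCast_nonneg m)
  | cons n L ih =>
    rw [List.mem_cons, not_or] at h
    rw [ψm_create_cons_apply, if_neg (Ne.symm h.1), ih h.2, map_zero, sub_zero]

lemma ψm_create_vac_append_cons {m : ℕ} {L₁ L₂ : List ℕ} (h₁ : m ∉ L₁) (h₂ : m ∉ L₂) :
    M.ψm m (M.create (L₁ ++ m :: L₂) M.vac) =
      (-1 : ℂ) ^ L₁.length • M.create (L₁ ++ L₂) M.vac := by
  induction L₁ with
  | nil => simp [ψm_create_cons_apply, ψm_create_vac_of_not_mem M h₂]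
  | cons n L₁ ih =>
    rw [List.mem_cons, not_or] at h₁
    rw [List.cons_append, ψm_create_cons_apply, if_neg (Ne.symm h₁.1), ih h₁.2, map_smul,
      List.cons_append, create_cons, Module.End.mul_apply, List.length_cons, pow_succ]
    simp

end CliffordFock

lemma List.reverse_range'_one_succ (j : ℕ) :
    (List.range' 1 (j + 1)).reverse = (j + 1) :: (List.range' 1 j).reverse := by
  rw [List.range'_concat, List.reverse_append, one_mul, add_comm]
  rfl

section Annihilation

open CliffordFock

variable {M : CliffordFock V} {χ : ℕ → ℂ} {Gm : ℤ → Module.End ℂ V}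

lemma IsGmFamily.apply_create_cons {ℓ : ℤ} (hGm : IsGmFamily M ℓ χ Gm) {i t : ℕ} {R : List ℕ}
    (hit : i < t) (hR : ∀ n ∈ R, n ≤ i) :
    Gm (i + 1) (M.create (t :: R) M.vac) =
      ((ℓ - i : ℤ) : ℂ) • M.ψm i (M.create (t :: R) M.vac) + χ (t - i) • M.create R M.vac := by
  obtain ⟨N, hN⟩ := hGm (i + 1) (M.create (t :: R) M.vac)
  rw [hN (max N t) (le_max_left N t), add_sub_cancel_right, show ℓ + 1 - (i + 1) = ℓ - i by ring]
  congr 1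
  rw [sum_eq_single_of_mem (t - i) (by simp; omega)]
  · rw [show ((t - i : ℕ) : ℤ) + (i + 1) - 1 = (t : ℕ) by push_cast [Nat.cast_sub hit.le]; ring,
      ← List.nil_append (t :: R), M.ψm_create_vac_append_cons List.not_mem_nil
        (fun h => by have := hR t h; omega)]
    simp
  · intro n hn _
    rw [mem_Icc] at hn
    rw [show (n : ℤ) + (i + 1) - 1 = (n + i : ℕ) by push_cast; ring,
      M.ψm_create_vac_of_not_mem, smul_zero]
    rw [List.mem_cons, not_or]
    exact ⟨by omega, fun h => by have := hR _ h; omega⟩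

lemma IsGmFamily.prod_apply_create {ℓ : ℕ} (hGm : IsGmFamily M ℓ χ Gm) {j t : ℕ} (hjℓ : j < ℓ)
    (hjt : j < t) :
    ((List.range' 1 (j + 1)).map fun n : ℕ => Gm n).prod
        (M.create (t :: (List.range' 1 j).reverse) M.vac) =
      omegaCoeff ℓ (fun n => -χ n) j t • M.vac := by
  induction j generalizing t with
  | zero =>
    have h := hGm.apply_create_cons (i := 0) hjt (R := []) (by simp)
    rw [M.ψm_create_vac_of_not_mem (by simp; omega)] at h
    simpa [omegaCoeff_zero, create] using h
  | succ j ih =>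
    have h := hGm.apply_create_cons (i := j + 1) hjt (R := (List.range' 1 (j + 1)).reverse)
      (fun n hn => by simp at hn; omega)
    rw [List.reverse_range'_one_succ, ← List.singleton_append,
      M.ψm_create_vac_append_cons (by simp; omega) (by simp; omega), List.singleton_append,
      List.singleton_append, List.length_singleton, pow_one] at h
    rw [List.range'_concat, List.map_append, List.prod_append, Module.End.mul_apply,
      List.map_singleton, List.prod_singleton, List.reverse_range'_one_succ,
      show ((1 + 1 * (j + 1) : ℕ) : ℤ) = (j + 1 : ℕ) + 1 by push_cast; ring, h, map_add, map_smul,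
      map_smul, map_smul, ih (by omega) (by omega), ih (t := j + 1) (by omega) (by omega),
      omegaCoeff_succ _ hjℓ]
    push_cast
    module

end Annihilation

theorem G_action_on_Omega_eq_schur (M : CliffordFock V)
    (S : ℕ → MvPolynomial ℕ ℚ) (hS : IsSchurFamily S)
    (ℓ : ℕ) (hℓ : 1 ≤ ℓ) (χ : ℕ → ℂ)
    (Gm : ℤ → Module.End ℂ V) (hGm : IsGmFamily M (ℓ : ℤ) χ Gm) :
    (((List.range' 1 ℓ).map Gm).prod) (M.Omega ℓ) =
      ((-1 : ℂ) ^ ℓ * (ℓ.factorial : ℂ) *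
        MvPolynomial.aeval (fun n : ℕ => -χ n) (S ℓ)) • M.vac := by
  obtain ⟨m, rfl⟩ : ∃ m, ℓ = m + 1 := ⟨ℓ - 1, by omega⟩
  have hΩ : M.Omega (m + 1) = M.create ((m + 1) :: (List.range' 1 m).reverse) M.vac := by
    rw [← List.reverse_range'_one_succ]
    rfl
  -- `List.range' 1 (m + 1)` is coerced to a list of integers through the list monad
  have hGs : (List.range' 1 (m + 1)).map Gm = (List.range' 1 (m + 1)).map fun n : ℕ => Gm n := by
    simp [← List.map_eq_flatMap]
  rw [hΩ, hGs, hGm.prod_apply_create (lt_add_one m) (lt_add_one m),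
    omegaCoeff_self _ _ (by simp [hS.apply_zero]) (hS.aeval_newton _)]
end

section
/- Let q be a positive integer and define G^-(n - 1/2) = -(q + n) Psi^-(n - 1/2) + sum_{k>=1} chi_{-k} Psi^-(k + n - 1/2) acting on the Clifford module F, and G^+(i - 1/2) = -i Psi^+(i - 1/2). Then the vector Psi^-(-q - 1/2) 1 does not lie in the subspace U(A).1 generated from the vacuum by all the operators G^±(r), r in 1/2 + Z, together with scalars. In particular the module generated by 1 is a proper submodule. -/
variable {V : Type} [AddCommGroup V] [Module ℂ V]

/-!
Take the formal series `Λ = ∑_{t ≥ q} ν_t Ψ⁺(t + 1/2)` with `ν_q = 1`. It anticommutes with the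
`G⁺`'s, and `{Λ, G⁻(-j - 1/2)} = (j - q) ν_j + ∑_{t < j} ν_t χ_{-(j-t)}`, so choosing `ν` by this
recursion (solvable since `j - q ≠ 0` for `j > q`) makes `Λ` anticommute with every `G⁻` as well.
As `Λ` kills `1`, it kills all of `U(A).1`, whereas `Λ Ψ⁻(-q - 1/2) 1 = ν_q 1 = 1 ≠ 0`.
Being an infinite sum, `Λ` is handled through its truncations: "`Λ` kills `v`" means that all
long enough truncations kill `v`.
-/

open Filter

def eventualKer {R M N : Type*} [Semiring R] [AddCommMonoid M] [Module R M] [AddCommMonoid N]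
    [Module R N] (A : ℕ → M →ₗ[R] N) : Submodule R M where
  carrier := {v | ∀ᶠ n in atTop, A n v = 0}
  add_mem' ha hb := by
    filter_upwards [ha, hb] with n ha hb
    rw [map_add, ha, hb, add_zero]
  zero_mem' := Eventually.of_forall fun n => map_zero (A n)
  smul_mem' c _ ha := by
    filter_upwards [ha] with n ha
    rw [map_smul, ha, smul_zero]

lemma Submodule.list_prod_apply_mem {R M : Type*} [Semiring R] [AddCommMonoid M] [Module R M]
    (p : Submodule R M) {L : List (Module.End R M)} (hL : ∀ g ∈ L, ∀ v ∈ p, g v ∈ p)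
    {v : M} (hv : v ∈ p) : L.prod v ∈ p := by
  induction L with
  | nil => exact hv
  | cons g L ih =>
    rw [List.prod_cons, Module.End.mul_apply]
    exact hL g List.mem_cons_self _ (ih fun g' hg' => hL g' (List.mem_cons_of_mem _ hg'))

/-- `{Ψ⁺(m + 1/2), G⁻(d - 1/2)}`, with `χ n` standing for `χ_{-n}`. -/
def gmAnticommCoeff (ℓ : ℤ) (χ : ℕ → ℂ) (m d : ℤ) : ℂ :=
  (if m + d = 0 then ((ℓ + 1 - d : ℤ) : ℂ) else 0) + if 0 < -d - m then χ (-d - m).toNat else 0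

noncomputable def annihilatorCoeff (q : ℕ) (χ : ℕ → ℂ) (j : ℕ) : ℂ :=
  if j < q then 0
  else if j = q then 1
  else -((j : ℂ) - q)⁻¹ * ∑ t : Fin j, annihilatorCoeff q χ t * χ (j - t)
termination_by j
decreasing_by exact t.isLt

lemma annihilatorCoeff_of_lt (q : ℕ) (χ : ℕ → ℂ) {j : ℕ} (h : j < q) :
    annihilatorCoeff q χ j = 0 := by
  rw [annihilatorCoeff, if_pos h]

lemma annihilatorCoeff_self (q : ℕ) (χ : ℕ → ℂ) : annihilatorCoeff q χ q = 1 := by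
  rw [annihilatorCoeff, if_neg (lt_irrefl q), if_pos rfl]

lemma annihilatorCoeff_recurrence (q : ℕ) (χ : ℕ → ℂ) (j : ℕ) :
    ((j : ℂ) - q) * annihilatorCoeff q χ j +
      ∑ t ∈ Finset.range j, annihilatorCoeff q χ t * χ (j - t) = 0 := by
  rcases lt_or_ge j q with hjq | hqj
  · rw [annihilatorCoeff_of_lt q χ hjq, mul_zero, zero_add]
    exact Finset.sum_eq_zero fun t ht => by
      rw [annihilatorCoeff_of_lt q χ ((Finset.mem_range.mp ht).trans hjq), zero_mul]
  rcases hqj.eq_or_lt with rfl | hqj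
  · rw [sub_self, zero_mul, zero_add]
    exact Finset.sum_eq_zero fun t ht => by
      rw [annihilatorCoeff_of_lt q χ (Finset.mem_range.mp ht), zero_mul]
  · have hne : (j : ℂ) - q ≠ 0 := sub_ne_zero.mpr (Nat.cast_injective.ne hqj.ne')
    rw [annihilatorCoeff, if_neg hqj.not_gt, if_neg hqj.ne',
      Fin.sum_univ_eq_sum_range (fun t => annihilatorCoeff q χ t * χ (j - t)), ← mul_assoc,
      mul_neg, mul_inv_cancel₀ hne, neg_one_mul, neg_add_cancel]

lemma gmAnticommCoeff_natCast_neg_natCast (q : ℕ) (χ : ℕ → ℂ) (t j : ℕ) :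
    gmAnticommCoeff (-q - 1) χ t (-j) =
      (if t = j then (j : ℂ) - q else 0) + if t ∈ Finset.range j then χ (j - t) else 0 := by
  rw [gmAnticommCoeff]
  congr 1
  · refine if_congr (by omega) ?_ rfl
    push_cast
    ring
  · exact if_congr (by rw [Finset.mem_range]; omega) (congrArg χ (by omega)) rfl

lemma eventually_sum_annihilatorCoeff_mul_gmAnticommCoeff (q : ℕ) (χ : ℕ → ℂ) (d : ℤ) :
    ∀ᶠ N in atTop,
      ∑ t ∈ Finset.range N, annihilatorCoeff q χ t * gmAnticommCoeff (-q - 1) χ t d = 0 := by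
  filter_upwards [eventually_gt_atTop (-d).toNat] with N hN
  rcases lt_or_ge 0 d with hd | hd
  · refine Finset.sum_eq_zero fun t _ => ?_
    rw [gmAnticommCoeff, if_neg (by omega), if_neg (by omega), add_zero, mul_zero]
  · obtain ⟨j, rfl⟩ : ∃ j : ℕ, d = -j := ⟨(-d).toNat, by omega⟩
    have hjN : j ∈ Finset.range N := Finset.mem_range.mpr (by omega)
    simp only [gmAnticommCoeff_natCast_neg_natCast, mul_add, mul_ite, mul_zero,
      Finset.sum_add_distrib, Finset.sum_ite_eq', if_pos hjN, Finset.sum_ite_mem,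
      Finset.inter_eq_right.mpr (Finset.range_subset_range.mpr (Finset.mem_range.mp hjN).le)]
    rw [mul_comm, annihilatorCoeff_recurrence]

namespace CliffordFock

variable (M : CliffordFock V)

lemma ψp_ψm_add_ψm_ψp (m s : ℤ) (w : V) :
    M.ψp m (M.ψm s w) + M.ψm s (M.ψp m w) = if m + s + 1 = 0 then w else 0 := by
  have h := DFunLike.congr_fun (M.anti_pm m s) w
  simp only [LinearMap.add_apply, Module.End.mul_apply] at h
  rw [h]
  split_ifs <;> rfl

lemma ψp_ψp_swap (m t : ℤ) (w : V) : M.ψp t (M.ψp m w) = -M.ψp m (M.ψp t w) := by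
  have h := DFunLike.congr_fun (M.anti_pp t m) w
  simp only [LinearMap.add_apply, Module.End.mul_apply, LinearMap.zero_apply] at h
  exact eq_neg_of_add_eq_zero_left h

lemma ψp_ψm_vac (t : ℕ) (s : ℤ) :
    M.ψp t (M.ψm s M.vac) = if (t : ℤ) + s + 1 = 0 then M.vac else 0 := by
  rw [← M.ψp_ψm_add_ψm_ψp, M.vac_p t (Int.natCast_nonneg t), map_zero, add_zero]

lemma vac_ne_zero : M.vac ≠ 0 := by
  have h : M.basis (∅, ∅) = M.vac := by simpa using M.basis_eq ∅ ∅
  exact h ▸ M.basis.ne_zero _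

lemma ψp_Gm_add_Gm_ψp {ℓ : ℤ} {χ : ℕ → ℂ} {Gm : ℤ → Module.End ℂ V}
    (hGm : IsGmFamily M ℓ χ Gm) (m d : ℤ) (v : V) :
    M.ψp m (Gm d v) + Gm d (M.ψp m v) = gmAnticommCoeff ℓ χ m d • v := by
  obtain ⟨N₁, h₁⟩ := hGm d v
  obtain ⟨N₂, h₂⟩ := hGm d (M.ψp m v)
  set N := max (max N₁ N₂) (-d - m).toNat
  rw [h₁ N (by omega), h₂ N (by omega)]
  simp only [map_add, map_sum, map_smul]
  rw [add_add_add_comm, ← smul_add, ← Finset.sum_add_distrib]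
  simp only [← smul_add, ψp_ψm_add_ψm_ψp, smul_ite, smul_zero]
  have hsum : (∑ n ∈ Finset.Icc 1 N, if m + ((n : ℤ) + d - 1) + 1 = 0 then χ n • v else 0) =
      (if 0 < -d - m then χ (-d - m).toNat else 0) • v := by
    split_ifs with hpos
    · rw [Finset.sum_eq_single (-d - m).toNat]
      · rw [if_pos (by omega)]
      · intro n _ hn
        rw [if_neg (by omega)]
      · intro hn
        exact absurd (Finset.mem_Icc.mpr ⟨by omega, by omega⟩) hn
    · rw [zero_smul]
      refine Finset.sum_eq_zero fun n hn => if_neg ?_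
      have := (Finset.mem_Icc.mp hn).1
      omega
  rw [hsum, gmAnticommCoeff, add_smul]
  simp only [ite_smul, zero_smul]
  congr 1
  exact if_congr (show _ ↔ m + d = 0 by omega) rfl rfl

noncomputable def truncPsiPlus (ν : ℕ → ℂ) (N : ℕ) : Module.End ℂ V :=
  ∑ t ∈ Finset.range N, ν t • M.ψp t

lemma truncPsiPlus_apply (ν : ℕ → ℂ) (N : ℕ) (v : V) :
    M.truncPsiPlus ν N v = ∑ t ∈ Finset.range N, ν t • M.ψp t v := by
  simp only [truncPsiPlus, LinearMap.sum_apply, LinearMap.smul_apply]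

variable {M} {ν : ℕ → ℂ}

lemma vac_mem_eventualKer : M.vac ∈ eventualKer (M.truncPsiPlus ν) :=
  Eventually.of_forall fun N => by
    rw [truncPsiPlus_apply]
    exact Finset.sum_eq_zero fun t _ => by rw [M.vac_p t (Int.natCast_nonneg t), smul_zero]

lemma ψp_mem_eventualKer (m : ℤ) {v : V} (hv : v ∈ eventualKer (M.truncPsiPlus ν)) :
    M.ψp m v ∈ eventualKer (M.truncPsiPlus ν) := by
  filter_upwards [hv] with N hN
  have hanti : M.truncPsiPlus ν N (M.ψp m v) = -M.ψp m (M.truncPsiPlus ν N v) := by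
    simp only [truncPsiPlus_apply, map_sum, map_smul, ← Finset.sum_neg_distrib, ← smul_neg]
    exact Finset.sum_congr rfl fun t _ => by rw [ψp_ψp_swap]
  rw [hanti, hN, map_zero, neg_zero]

lemma Gm_mem_eventualKer {ℓ : ℤ} {χ : ℕ → ℂ} {Gm : ℤ → Module.End ℂ V}
    (hGm : IsGmFamily M ℓ χ Gm)
    (hν : ∀ d : ℤ, ∀ᶠ N in atTop, ∑ t ∈ Finset.range N, ν t * gmAnticommCoeff ℓ χ t d = 0)
    (d : ℤ) {v : V} (hv : v ∈ eventualKer (M.truncPsiPlus ν)) :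
    Gm d v ∈ eventualKer (M.truncPsiPlus ν) := by
  filter_upwards [hv, hν d] with N hN hνN
  have hanti : M.truncPsiPlus ν N (Gm d v) + Gm d (M.truncPsiPlus ν N v) =
      (∑ t ∈ Finset.range N, ν t * gmAnticommCoeff ℓ χ t d) • v := by
    simp only [truncPsiPlus_apply, map_sum, map_smul, ← Finset.sum_add_distrib, ← smul_add,
      M.ψp_Gm_add_Gm_ψp hGm, Finset.sum_smul, smul_smul]
  rwa [hN, map_zero, add_zero, hνN, zero_smul] at hanti

lemma ψm_vac_not_mem_eventualKer {n : ℕ} (hn : ν n ≠ 0) :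
    M.ψm (-(n + 1 : ℤ)) M.vac ∉ eventualKer (M.truncPsiPlus ν) := by
  intro h
  obtain ⟨N, hN, hnN⟩ := (h.and (eventually_gt_atTop n)).exists
  have hval : M.truncPsiPlus ν N (M.ψm (-(n + 1 : ℤ)) M.vac) = ν n • M.vac := by
    rw [truncPsiPlus_apply, Finset.sum_eq_single_of_mem n (Finset.mem_range.mpr hnN)]
    · rw [M.ψp_ψm_vac, if_pos (by ring)]
    · intro t _ htn
      rw [M.ψp_ψm_vac, if_neg (by omega), smul_zero]
  exact M.vac_ne_zero ((smul_eq_zero.mp (hval ▸ hN)).resolve_left hn)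

end CliffordFock

theorem vacuum_module_proper_general (M : CliffordFock V) (q : ℕ) (χ : ℕ → ℂ)
    (Gp : ℤ → Module.End ℂ V)
    (hGp : ∀ i : ℤ, Gp i = ((-i : ℤ) : ℂ) • M.ψp (i - 1))
    (Gm : ℤ → Module.End ℂ V)
    -- `G⁻(n - 1/2) = -(q + n) Ψ⁻(n - 1/2) + ∑_{k ≥ 1} χ_{-k} Ψ⁻(k + n - 1/2)`,
    -- i.e. the coefficient `ℓ + 1 - n` with `ℓ = -q - 1`:
    (hGm : IsGmFamily M (-(q : ℤ) - 1) χ Gm) :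
    M.ψm (-(q + 1 : ℤ)) M.vac ∉
      Submodule.span ℂ {v : V | ∃ L : List (Module.End ℂ V),
        (∀ g ∈ L, (∃ r : ℤ, g = Gp r) ∨ ∃ r : ℤ, g = Gm r) ∧ v = L.prod M.vac} := by
  set K := eventualKer (M.truncPsiPlus (annihilatorCoeff q χ))
  have hG_mem : ∀ g : Module.End ℂ V, ((∃ r, g = Gp r) ∨ ∃ r, g = Gm r) → ∀ v ∈ K, g v ∈ K := by
    rintro g (⟨r, rfl⟩ | ⟨r, rfl⟩) v hv
    · rw [hGp, LinearMap.smul_apply]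
      exact K.smul_mem _ (CliffordFock.ψp_mem_eventualKer _ hv)
    · exact CliffordFock.Gm_mem_eventualKer hGm
        (eventually_sum_annihilatorCoeff_mul_gmAnticommCoeff q χ) r hv
  intro hmem
  have hq_coeff : annihilatorCoeff q χ q ≠ 0 := by
    rw [annihilatorCoeff_self]
    exact one_ne_zero
  refine CliffordFock.ψm_vac_not_mem_eventualKer hq_coeff (Submodule.span_le.mpr ?_ hmem)
  rintro _ ⟨L, hL, rfl⟩
  exact K.list_prod_apply_mem (fun g hg => hG_mem g (hL g hg)) CliffordFock.vac_mem_eventualKer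

theorem vacuum_module_proper (M : CliffordFock V) (q : ℕ) (hq : 1 ≤ q) (χ : ℕ → ℂ)
    (Gp : ℤ → Module.End ℂ V)
    (hGp : ∀ i : ℤ, Gp i = ((-i : ℤ) : ℂ) • M.ψp (i - 1))
    (Gm : ℤ → Module.End ℂ V)
    -- `G⁻(n - 1/2) = -(q + n) Ψ⁻(n - 1/2) + ∑_{k ≥ 1} χ_{-k} Ψ⁻(k + n - 1/2)`,
    -- i.e. the coefficient `ℓ + 1 - n` with `ℓ = -q - 1`:
    (hGm : IsGmFamily M (-(q : ℤ) - 1) χ Gm) :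
    M.ψm (-(q + 1 : ℤ)) M.vac ∉
      Submodule.span ℂ {v : V | ∃ L : List (Module.End ℂ V),
        (∀ g ∈ L, (∃ r : ℤ, g = Gp r) ∨ ∃ r : ℤ, g = Gm r) ∧ v = L.prod M.vac} :=
  vacuum_module_proper_general M q χ Gp hGp Gm hGm
end

section
/- Let ell >= 0 and define G^-(n - 1/2) = (ell + 1 - n) Psi^-(n - 1/2) + sum_{k>=1} chi_{-k} Psi^-(k + n - 1/2) on the Clifford module F. Then for every N >= 0, G^-(-N - 1/2) G^-(-N + 1/2) ... G^-(-1/2) 1 = C * Psi^-(-N - 1/2) ... Psi^-(-1/2) 1, where C = (ell+1)(ell+2)...(ell+N+1) is nonzero. -/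
variable {V : Type} [AddCommGroup V] [Module ℂ V]

/-!
A mode `Ψ⁻(r)` with `r ≥ -N + 1/2` annihilates `Ψ⁻(-N + 1/2) ⋯ Ψ⁻(-1/2) 1`: anticommuted to the
right, it either meets its own copy, and `Ψ⁻(r)² = 0`, or reaches the vacuum, which it kills as
`r > 0`. On this vector every term `χ_{-k} Ψ⁻(k - N - 1/2)`, `k ≥ 1`, of `G⁻(-N - 1/2)` is such a
mode, so only the leading term `(ℓ + N + 1) Ψ⁻(-N - 1/2)` survives; induct on `N`.
-/

theorem List.prod_map_reverse_range_succ {M : Type*} [Monoid M] (f : ℕ → M) (n : ℕ) :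
    ((List.range (n + 1)).reverse.map f).prod = f n * ((List.range n).reverse.map f).prod := by
  simp [List.range_succ]

namespace CliffordFock

variable (M : CliffordFock V)

/-- `Ψ⁻(-k + 1/2) ⋯ Ψ⁻(-3/2) Ψ⁻(-1/2) |0⟩`. -/
noncomputable def minusWedge (k : ℕ) : V :=
  (((List.range k).reverse.map fun n : ℕ => M.ψm (-(n + 1 : ℤ))).prod) M.vac

theorem minusWedge_zero : M.minusWedge 0 = M.vac := rfl

theorem minusWedge_succ (k : ℕ) :
    M.minusWedge (k + 1) = M.ψm (-(k : ℤ) - 1) (M.minusWedge k) := by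
  rw [minusWedge, List.prod_map_reverse_range_succ, Module.End.mul_apply, neg_add']
  rfl

theorem ψm_mul_self (m : ℤ) : M.ψm m * M.ψm m = 0 := by
  have h := M.anti_mm m m
  rw [← two_smul ℂ] at h
  exact (smul_eq_zero.mp h).resolve_left two_ne_zero

theorem ψm_minusWedge_of_neg_le {k : ℕ} {m : ℤ} (hm : -(k : ℤ) ≤ m) :
    M.ψm m (M.minusWedge k) = 0 := by
  induction k generalizing m with
  | zero => exact M.vac_m m (by simpa using hm)
  | succ k ih =>
    rw [minusWedge_succ, ← Module.End.mul_apply]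
    by_cases h : m = -(k : ℤ) - 1
    · rw [h, ψm_mul_self, LinearMap.zero_apply]
    · rw [eq_neg_of_add_eq_zero_left (M.anti_mm m _), LinearMap.neg_apply,
        Module.End.mul_apply, ih (by omega), map_zero, neg_zero]

end CliffordFock

namespace IsGmFamily

variable {M : CliffordFock V} {ℓ : ℤ} {χ : ℕ → ℂ} {Gm : ℤ → Module.End ℂ V}

theorem apply_minusWedge (hGm : IsGmFamily M ℓ χ Gm) (N : ℕ) :
    Gm (-(N : ℤ)) (M.minusWedge N) = ((ℓ + N + 1 : ℤ) : ℂ) • M.minusWedge (N + 1) := by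
  obtain ⟨N₀, h⟩ := hGm (-(N : ℤ)) (M.minusWedge N)
  have tail_vanishes : ∀ n ∈ Finset.Icc 1 N₀,
      χ n • M.ψm ((n : ℤ) + -(N : ℤ) - 1) (M.minusWedge N) = 0 := fun n hn => by
    rw [M.ψm_minusWedge_of_neg_le (by grind), smul_zero]
  rw [h N₀ le_rfl, Finset.sum_eq_zero tail_vanishes, add_zero, M.minusWedge_succ]
  congr 2
  ring

theorem prod_apply_vac (hGm : IsGmFamily M ℓ χ Gm) (N : ℕ) :
    (((List.range N).reverse.map fun n : ℕ => Gm (-(n : ℤ))).prod) M.vac =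
      (∏ j ∈ Finset.Icc 1 N, ((ℓ + j : ℤ) : ℂ)) • M.minusWedge N := by
  induction N with
  | zero => simp [M.minusWedge_zero]
  | succ N ih =>
    rw [List.prod_map_reverse_range_succ, Module.End.mul_apply, ih, map_smul,
      hGm.apply_minusWedge, smul_smul, Finset.prod_Icc_succ_top (by omega)]
    congr 2
    push_cast
    ring

end IsGmFamily

theorem Gminus_negative_modes_on_vacuum (M : CliffordFock V) (ℓ : ℕ) (χ : ℕ → ℂ)
    (Gm : ℤ → Module.End ℂ V) (hGm : IsGmFamily M (ℓ : ℤ) χ Gm) :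
    ∀ N : ℕ,
      (((List.range (N + 1)).reverse.map fun n => Gm (-(n : ℤ))).prod) M.vac =
        (∏ j ∈ Finset.Icc 1 (N + 1), ((ℓ + j : ℕ) : ℂ)) •
          (((List.range (N + 1)).reverse.map fun n => M.ψm (-(n + 1 : ℤ))).prod) M.vac ∧
      (∏ j ∈ Finset.Icc 1 (N + 1), ((ℓ + j : ℕ) : ℂ)) ≠ 0 := by
  intro N
  refine ⟨?_, Finset.prod_ne_zero_iff.mpr fun j hj => ?_⟩
  -- The lists in the statement are lists of integers: `List.range` is lifted through `Nat.cast`.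
  · simp only [List.bind_eq_flatMap, List.pure_def, ← List.map_eq_flatMap, List.map_map,
      Function.comp_def]
    rw [hGm.prod_apply_vac]
    push_cast
    rfl
  · exact Nat.cast_ne_zero.mpr (by grind)
end

section
/- Let P_r denote the set of strictly decreasing r-tuples (lambda_1 > ... > lambda_r >= 1/2) of half-odd-integers and Q_s the set of strictly decreasing s-tuples (mu_1 > ... > mu_s >= 3/2) of half-odd-integers. Then the vectors v_{lambda,mu} = Psi^-(-lambda_1)...Psi^-(-lambda_r) Psi^+(-mu_1)...Psi^+(-mu_s) 1, as (lambda, mu) ranges over all pairs (including empty tuples), are linearly independent in F, and they span the subspace F~ = Ker_F Psi^-(1/2). -/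
variable {V : Type} [AddCommGroup V] [Module ℂ V]

/-- `v_{λ,μ} = Ψ⁻(-λ₁)⋯Ψ⁻(-λ_r) Ψ⁺(-μ₁)⋯Ψ⁺(-μ_s) |0⟩`, where `λ` (resp. `μ`) is the
strictly decreasing tuple of half-odd integers `n + 1/2`, `n ∈ A` (resp. `n ∈ B`). -/
noncomputable def CliffordFock.vv (M : CliffordFock V) (A B : Finset ℕ) : V :=
  ((((A.sort (· ≤ ·)).reverse.map fun n => M.ψm (-(n + 1 : ℤ))).prod *
    ((B.sort (· ≤ ·)).reverse.map fun n => M.ψp (-(n + 1 : ℤ))).prod)) M.vac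

/-! The vectors `vv A B` form the given basis of `F`. `Ψ⁻(1/2)` anticommutes with every creation
operator except `Ψ⁺(-1/2)` and kills the vacuum, so it kills `vv A B` when `0 ∉ B` and sends
`vv A (insert 0 B)` to `± vv A B`. Conversely, `Ψ⁻(1/2) Ψ⁺(-1/2) + Ψ⁺(-1/2) Ψ⁻(1/2) = 1` gives
`x = Ψ⁻(1/2) (Ψ⁺(-1/2) x)` for `x` in the kernel, so the kernel lies in the range of `Ψ⁻(1/2)`,
which is spanned by the images of the basis. -/

theorem List.mul_prod_of_forall_anticommute {R : Type*} [Ring R] (T : R) (L : List R)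
    (h : ∀ X ∈ L, T * X = -(X * T)) :
    T * L.prod = (-1) ^ L.length * (L.prod * T) := by
  induction L with
  | nil => simp
  | cons X L ih =>
    rw [List.prod_cons, ← mul_assoc, h X List.mem_cons_self, neg_mul, mul_assoc,
      ih fun Y hY => h Y (List.mem_cons_of_mem _ hY), List.length_cons, pow_succ, ← mul_assoc X,
      ← ((Commute.neg_one_left X).pow_left _).eq]
    noncomm_ring

namespace CliffordFock

noncomputable def creation (f : ℤ → Module.End ℂ V) (A : Finset ℕ) : Module.End ℂ V :=
  ((A.sort (· ≤ ·)).reverse.map fun n : ℕ => f (-(n + 1 : ℤ))).prod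

lemma creation_insert_zero (f : ℤ → Module.End ℂ V) {B : Finset ℕ} (hB : 0 ∉ B) :
    creation f (insert 0 B) = creation f B * f (-1) := by
  simp [creation, Finset.sort_insert _ (fun b _ => Nat.zero_le b) hB]

lemma mul_creation_of_forall_anticommute (T : Module.End ℂ V) (f : ℤ → Module.End ℂ V)
    (A : Finset ℕ) (h : ∀ n ∈ A, T * f (-(n + 1 : ℤ)) = -(f (-(n + 1 : ℤ)) * T)) :
    T * creation f A = (-1) ^ A.card * (creation f A * T) := by
  rw [creation, List.mul_prod_of_forall_anticommute, List.length_map, List.length_reverse,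
    Finset.length_sort]
  simpa using h

variable (M : CliffordFock V)

-- In `vv` the binder `n` elaborates at type `ℤ`, the sorted list being lifted through the list monad.
lemma vv_eq_creation (A B : Finset ℕ) :
    M.vv A B = (creation M.ψm A * creation M.ψp B) M.vac := by
  simp only [vv, creation, List.pure_def, List.bind_eq_flatMap, ← List.map_eq_flatMap,
    List.map_map]
  rfl

lemma vv_eq_basis (A B : Finset ℕ) : M.vv A B = M.basis (A, B) :=
  (M.basis_eq A B).symm

lemma ψm_zero_anticommute_ψm (k : ℤ) : M.ψm 0 * M.ψm k = -(M.ψm k * M.ψm 0) :=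
  eq_neg_of_add_eq_zero_left (M.anti_mm 0 k)

lemma ψm_zero_anticommute_ψp {k : ℤ} (hk : k ≠ -1) : M.ψm 0 * M.ψp k = -(M.ψp k * M.ψm 0) := by
  have h := M.anti_pm k 0
  rw [if_neg (by omega)] at h
  exact eq_neg_of_add_eq_zero_right h

lemma ψm_zero_mul_creation (A : Finset ℕ) {B : Finset ℕ} (hB : 0 ∉ B) :
    M.ψm 0 * (creation M.ψm A * creation M.ψp B) =
      (-1) ^ (A.card + B.card) * (creation M.ψm A * creation M.ψp B * M.ψm 0) := by
  have hψm := mul_creation_of_forall_anticommute _ _ A fun n _ => M.ψm_zero_anticommute_ψm _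
  have hψp := mul_creation_of_forall_anticommute _ _ B fun n hn =>
    M.ψm_zero_anticommute_ψp fun h => hB (by obtain rfl : n = 0 := (by omega); exact hn)
  rw [← mul_assoc, hψm, mul_assoc, mul_assoc, hψp, ← mul_assoc (creation M.ψm A),
    ← ((Commute.neg_one_left _).pow_left _).eq, pow_add]
  noncomm_ring

lemma ψm_zero_vv_of_zero_notMem (A : Finset ℕ) {B : Finset ℕ} (hB : 0 ∉ B) :
    M.ψm 0 (M.vv A B) = 0 := by
  rw [vv_eq_creation, ← Module.End.mul_apply, ψm_zero_mul_creation _ _ hB, Module.End.mul_apply,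
    Module.End.mul_apply, M.vac_m 0 le_rfl, map_zero, map_zero]

lemma ψm_zero_ψp_neg_one_vac : M.ψm 0 (M.ψp (-1) M.vac) = M.vac := by
  have h := congrArg (· M.vac) (M.anti_pm (-1) 0)
  simpa [M.vac_m 0 le_rfl] using h

lemma ψm_zero_vv_insert_zero (A : Finset ℕ) {B : Finset ℕ} (hB : 0 ∉ B) :
    M.ψm 0 (M.vv A (insert 0 B)) = (-1 : ℂ) ^ (A.card + B.card) • M.vv A B := by
  rw [vv_eq_creation, vv_eq_creation, creation_insert_zero _ hB, ← mul_assoc,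
    ← Module.End.mul_apply, ← mul_assoc, ψm_zero_mul_creation _ _ hB,
    show (-1 : Module.End ℂ V) ^ (A.card + B.card) =
      algebraMap ℂ _ ((-1) ^ (A.card + B.card)) by simp]
  simp only [Module.End.mul_apply, M.ψm_zero_ψp_neg_one_vac, Module.algebraMap_end_apply]

lemma ψm_zero_vv_mem_span (A B : Finset ℕ) :
    M.ψm 0 (M.vv A B) ∈ Submodule.span ℂ {v | ∃ A B : Finset ℕ, 0 ∉ B ∧ v = M.vv A B} := by
  by_cases hB : 0 ∈ B
  · rw [← Finset.insert_erase hB, M.ψm_zero_vv_insert_zero A (Finset.notMem_erase 0 B)]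
    exact Submodule.smul_mem _ _ (Submodule.subset_span ⟨A, _, Finset.notMem_erase 0 B, rfl⟩)
  · rw [M.ψm_zero_vv_of_zero_notMem A hB]
    exact Submodule.zero_mem _

lemma ker_ψm_zero_le_range : LinearMap.ker (M.ψm 0) ≤ LinearMap.range (M.ψm 0) := by
  intro x hx
  refine ⟨M.ψp (-1) x, ?_⟩
  have h := congrArg (· x) (M.anti_pm (-1) 0)
  simpa [LinearMap.mem_ker.mp hx] using h

end CliffordFock

theorem basis_of_ker (M : CliffordFock V) :
    LinearIndependent ℂ
      (fun p : {q : Finset ℕ × Finset ℕ // ∀ b ∈ q.2, 1 ≤ b} => M.vv p.1.1 p.1.2) ∧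
    Submodule.span ℂ
        {v : V | ∃ A B : Finset ℕ, (∀ b ∈ B, 1 ≤ b) ∧ v = M.vv A B} =
      LinearMap.ker (M.ψm 0) := by
  have hS : {v : V | ∃ A B : Finset ℕ, (∀ b ∈ B, 1 ≤ b) ∧ v = M.vv A B} =
      {v | ∃ A B : Finset ℕ, 0 ∉ B ∧ v = M.vv A B} := by
    simp [Nat.one_le_iff_ne_zero]
  refine ⟨?_, ?_⟩
  · convert M.basis.linearIndependent.comp _ Subtype.val_injective with p
    exact M.vv_eq_basis _ _
  rw [hS]
  refine le_antisymm (Submodule.span_le.mpr ?_) (M.ker_ψm_zero_le_range.trans ?_)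
  · rintro _ ⟨A, B, hB, rfl⟩
    exact M.ψm_zero_vv_of_zero_notMem A hB
  · rw [LinearMap.range_eq_map, ← M.basis.span_eq, Submodule.map_span, Submodule.span_le]
    rintro _ ⟨_, ⟨⟨A, B⟩, rfl⟩, rfl⟩
    rw [← M.vv_eq_basis]
    exact M.ψm_zero_vv_mem_span A B
end
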